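/- Let P be a real Hilbert space, 𝒜 : P → P a bounded self-adjoint linear operator, and α, β ∈ ℝ. For q ∈ P write |q|²_𝒜 = ⟨𝒜q, q⟩. Suppose (eₙ) in P satisfies e_{n+1} = (I − (β + α²)𝒜) eₙ + β 𝒜 e_{n−1} for all n ≥ 1. Define Eₙ = ‖eₙ‖² + β|e_{n−1}|²_𝒜 + α²|eₙ|²_𝒜 + (‖eₙ − e_{n−1}‖² − (β + α²)|eₙ − e_{n−1}|²_𝒜) and Pₙ = (‖eₙ − e_{n−1}‖² − (β + α²)|eₙ − e_{n−1}|²_𝒜) + 2α²|eₙ|²_𝒜 + β|e_{n+1} − e_{n−1}|²_𝒜. Then for every n ≥ 1: E_{n+1} − Eₙ + Pₙ = 0. -/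

import Mathlib

/-!
Write `a = eₙ`, `b = e_{n-1}`, `c = e_{n+1}`. The recursion says
`(c - a) + α² 𝒜 a + β 𝒜 (a - b) = 0`; pairing it with `c` and expanding each of the three
inner products by polarization (for the identity and for the symmetric form `⟪𝒜 ·, ·⟫`)
turns it term by term into `E_{n+1} − Eₙ + Pₙ = 0`.
-/

open scoped RealInnerProductSpace

namespace LinearMap.IsSymmetric

variable {E : Type*} [NormedAddCommGroup E] [InnerProductSpace ℝ E] {T : E →ₗ[ℝ] E}

theorem two_mul_inner_map_eq (hT : T.IsSymmetric) (x y : E) :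
    2 * ⟪T x, y⟫ = ⟪T x, x⟫ + ⟪T y, y⟫ - ⟪T (y - x), y - x⟫ := by
  have hxy : ⟪T y, x⟫ = ⟪T x, y⟫ := by rw [hT, real_inner_comm]
  simp only [map_sub, inner_sub_left, inner_sub_right, hxy]
  ring

end LinearMap.IsSymmetric

section RamshawMesina

variable {E : Type*} [NormedAddCommGroup E] [InnerProductSpace ℝ E]

/-- The energy `Eₙ`, as a function of `a = eₙ` and `b = e_{n-1}`. -/
def ramshawMesinaEnergy (T : E →ₗ[ℝ] E) (α β : ℝ) (a b : E) : ℝ :=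
  ‖a‖ ^ 2 + β * ⟪T b, b⟫ + α ^ 2 * ⟪T a, a⟫
    + (‖a - b‖ ^ 2 - (β + α ^ 2) * ⟪T (a - b), a - b⟫)

/-- The dissipation `Pₙ`, as a function of `a = eₙ`, `b = e_{n-1}` and `c = e_{n+1}`. -/
def ramshawMesinaDissipation (T : E →ₗ[ℝ] E) (α β : ℝ) (a b c : E) : ℝ :=
  (‖a - b‖ ^ 2 - (β + α ^ 2) * ⟪T (a - b), a - b⟫)
    + 2 * α ^ 2 * ⟪T a, a⟫ + β * ⟪T (c - b), c - b⟫

variable {T : E →ₗ[ℝ] E} {α β : ℝ} {a b c : E}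

theorem inner_ramshawMesina_step_eq_zero (hc : c = (a - (β + α ^ 2) • T a) + β • T b) :
    ⟪c - a, c⟫ + α ^ 2 * ⟪T a, c⟫ + β * ⟪T (a - b), c⟫ = 0 := by
  have hres : (c - a) + α ^ 2 • T a + β • T (a - b) = 0 := by
    rw [hc, map_sub]
    module
  simpa only [inner_add_left, inner_smul_left, RCLike.conj_to_real, inner_zero_left]
    using congrArg (⟪·, c⟫) hres

theorem ramshawMesinaEnergy_step (hT : T.IsSymmetric)
    (hc : c = (a - (β + α ^ 2) • T a) + β • T b) :
    ramshawMesinaEnergy T α β c a - ramshawMesinaEnergy T α β a b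
      + ramshawMesinaDissipation T α β a b c = 0 := by
  have hpair := inner_ramshawMesina_step_eq_zero hc
  have hid : 2 * ⟪c - a, c⟫ = ‖c‖ ^ 2 - ‖a‖ ^ 2 + ‖c - a‖ ^ 2 := by
    rw [norm_sub_sq_real, inner_sub_left, real_inner_self_eq_norm_sq, real_inner_comm]
    ring
  have hca := hT.two_mul_inner_map_eq a c
  have hcb := hT.two_mul_inner_map_eq b c
  rw [map_sub, inner_sub_left (T a)] at hpair
  unfold ramshawMesinaEnergy ramshawMesinaDissipation
  linear_combination 2 * hpair - hid - (α ^ 2 + β) * hca + β * hcb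

end RamshawMesina

theorem ramshaw_mesina_energy_identity_general
    {P : Type*} [NormedAddCommGroup P] [InnerProductSpace ℝ P]
    (𝒜 : P →L[ℝ] P) (hsa : ∀ x y : P, ⟪𝒜 x, y⟫ = ⟪x, 𝒜 y⟫)
    (α β : ℝ) (e : ℕ → P)
    (hrec : ∀ n : ℕ, 1 ≤ n →
      e (n + 1) = (e n - (β + α ^ 2) • 𝒜 (e n)) + β • 𝒜 (e (n - 1)))
    (E Pn : ℕ → ℝ)
    (hE : ∀ n : ℕ, 1 ≤ n →
      E n = ‖e n‖ ^ 2 + β * ⟪𝒜 (e (n - 1)), e (n - 1)⟫ + α ^ 2 * ⟪𝒜 (e n), e n⟫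
        + (‖e n - e (n - 1)‖ ^ 2
            - (β + α ^ 2) * ⟪𝒜 (e n - e (n - 1)), e n - e (n - 1)⟫))
    (hP : ∀ n : ℕ, 1 ≤ n →
      Pn n = (‖e n - e (n - 1)‖ ^ 2
            - (β + α ^ 2) * ⟪𝒜 (e n - e (n - 1)), e n - e (n - 1)⟫)
        + 2 * α ^ 2 * ⟪𝒜 (e n), e n⟫
        + β * ⟪𝒜 (e (n + 1) - e (n - 1)), e (n + 1) - e (n - 1)⟫) :
    ∀ n : ℕ, 1 ≤ n → E (n + 1) - E n + Pn n = 0 := by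
  intro n hn
  rw [hE (n + 1) n.succ_pos, hE n hn, hP n hn, Nat.add_sub_cancel]
  exact ramshawMesinaEnergy_step (T := (𝒜 : P →ₗ[ℝ] P)) hsa (hrec n hn)

/-- Energy identity `E_{n+1} − Eₙ + Pₙ = 0` for the Ramshaw–Mesina error recursion,
where `Eₙ = ‖eₙ‖² + β|e_{n−1}|²_𝒜 + α²|eₙ|²_𝒜 + (‖eₙ−e_{n−1}‖² − (β+α²)|eₙ−e_{n−1}|²_𝒜)`
and `Pₙ = (‖eₙ−e_{n−1}‖² − (β+α²)|eₙ−e_{n−1}|²_𝒜) + 2α²|eₙ|²_𝒜 + β|e_{n+1}−e_{n−1}|²_𝒜`,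
with `|q|²_𝒜 = ⟪𝒜q, q⟫`. -/
theorem ramshaw_mesina_energy_identity
    {P : Type*} [NormedAddCommGroup P] [InnerProductSpace ℝ P] [CompleteSpace P]
    (𝒜 : P →L[ℝ] P) (hsa : ∀ x y : P, ⟪𝒜 x, y⟫ = ⟪x, 𝒜 y⟫)
    (α β : ℝ) (e : ℕ → P)
    (hrec : ∀ n : ℕ, 1 ≤ n →
      e (n + 1) = (e n - (β + α ^ 2) • 𝒜 (e n)) + β • 𝒜 (e (n - 1)))
    (E Pn : ℕ → ℝ)
    (hE : ∀ n : ℕ, 1 ≤ n →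
      E n = ‖e n‖ ^ 2 + β * ⟪𝒜 (e (n - 1)), e (n - 1)⟫ + α ^ 2 * ⟪𝒜 (e n), e n⟫
        + (‖e n - e (n - 1)‖ ^ 2
            - (β + α ^ 2) * ⟪𝒜 (e n - e (n - 1)), e n - e (n - 1)⟫))
    (hP : ∀ n : ℕ, 1 ≤ n →
      Pn n = (‖e n - e (n - 1)‖ ^ 2
            - (β + α ^ 2) * ⟪𝒜 (e n - e (n - 1)), e n - e (n - 1)⟫)
        + 2 * α ^ 2 * ⟪𝒜 (e n), e n⟫
        + β * ⟪𝒜 (e (n + 1) - e (n - 1)), e (n + 1) - e (n - 1)⟫) :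
    ∀ n : ℕ, 1 ≤ n → E (n + 1) - E n + Pn n = 0 :=
  ramshaw_mesina_energy_identity_general 𝒜 hsa α β e hrec E Pn hE hP
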